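/- For every n ≥ 2 and all indices i_1,…,i_n ∈ {1,…,d}, one has (ev⊗id)(∂_{i_n} P_{i_{n−1},…,i_1}) = δ_{i_{n−1},i_n} · P_{i_{n−2},…,i_1}, where ev⊗id : ℂ⟨X_1,…,X_d⟩ ⊗ ℂ⟨X_1,…,X_d⟩ → ℂ⟨X_1,…,X_d⟩ is the linear map induced by A ⊗ B ↦ τ(A(x))·B. Consequently, for all n ≥ 1, P_{i_n,…,i_1} = X_{i_n}·P_{i_{n−1},…,i_1} − (ev⊗id)(∂_{i_n} P_{i_{n−1},…,i_1}); i.e., the recursive definition of the free Chebyshev polynomials coincides with the definition via conditional expectation against the semicircular trace. -/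

import Mathlib

open scoped ComplexOrder TensorProduct

noncomputable section

/-- Free Chebyshev polynomials, indexed by a word read left-to-right:
`cheb [i_n, ..., i_1] = P_{i_n, ..., i_1}`. -/
def cheb {d : ℕ} : List (Fin d) → FreeAlgebra ℂ (Fin d)
  | [] => 1
  | [i] => FreeAlgebra.ι ℂ i
  | i :: j :: t => FreeAlgebra.ι ℂ i * cheb (j :: t) - (if i = j then (1 : ℂ) else 0) • cheb t

/-- A faithful tracial state on a `*`-algebra. -/
def IsFaithfulTracialState {A : Type*} [Ring A] [StarRing A] [Algebra ℂ A]
    (τ : A →ₗ[ℂ] ℂ) : Prop :=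
  τ 1 = 1 ∧ (∀ a : A, 0 ≤ τ (star a * a)) ∧ (∀ a : A, τ (star a * a) = 0 → a = 0) ∧
    ∀ a b : A, τ (a * b) = τ (b * a)

/-- The `k`-th moment of the standard semicircle distribution on `[-2, 2]`. -/
def semicircleMoment (k : ℕ) : ℝ :=
  (1 / (2 * Real.pi)) * ∫ t in (-2 : ℝ)..2, t ^ k * Real.sqrt (4 - t ^ 2)

/-- `x` is a free semicircular system with respect to `τ`. -/
def IsFreeSemicircular {A : Type*} [Ring A] [StarRing A] [Algebra ℂ A] {d : ℕ}
    (τ : A →ₗ[ℂ] ℂ) (x : Fin d → A) : Prop :=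
  (∀ i, star (x i) = x i) ∧
  (∀ i k, τ (x i ^ k) = (semicircleMoment k : ℂ)) ∧
  ∀ (k : ℕ) (j : Fin (k + 1) → Fin d),
    (∀ s : Fin k, j s.castSucc ≠ j s.succ) →
    ∀ p : Fin (k + 1) → Polynomial ℂ,
      τ ((List.ofFn fun s : Fin (k + 1) =>
        Polynomial.aeval (x (j s)) (p s)
          - τ (Polynomial.aeval (x (j s)) (p s)) • (1 : A))).prod = 0

/-- The `L²`-norm `‖z‖₂ = τ(z z*)^{1/2}` associated with `τ`. -/
def l2norm {A : Type*} [Ring A] [StarRing A] [Algebra ℂ A] (τ : A →ₗ[ℂ] ℂ) (z : A) : ℝ :=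
  Real.sqrt (τ (z * star z)).re

/-- Noncommutative polynomials of degree at most `n`. -/
def degLE (d n : ℕ) : Submodule ℂ (FreeAlgebra ℂ (Fin d)) :=
  Submodule.span ℂ
    {w | ∃ I : List (Fin d), I.length ≤ n ∧ w = (I.map (FreeAlgebra.ι ℂ)).prod}

/-- Elements homogeneous of degree `n`. -/
def chebHomog {A : Type*} [Ring A] [Algebra ℂ A] {d : ℕ} (x : Fin d → A) (n : ℕ) :
    Submodule ℂ A :=
  Submodule.span ℂ
    {a | ∃ I : List (Fin d), I.length = n ∧ a = FreeAlgebra.lift ℂ x (cheb I)}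

/-- `‖P_n f‖₂`, the `ℓ²`-norm of the degree-`n` free Chebyshev coefficients of `f`. -/
def chebProjL2 {A : Type*} [Ring A] [StarRing A] [Algebra ℂ A] {d : ℕ}
    (τ : A →ₗ[ℂ] ℂ) (x : Fin d → A) (n : ℕ) (f : A) : ℝ :=
  Real.sqrt (∑ I : Fin n → Fin d,
    ‖τ (f * star (FreeAlgebra.lift ℂ x (cheb (List.ofFn I))))‖ ^ 2)

/-- The rescaled Chebyshev polynomials of the second kind, `𝒰_n(X) = U_n(X/2)`. -/
def chebU : ℕ → Polynomial ℂ
  | 0 => 1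
  | 1 => Polynomial.X
  | n + 2 => Polynomial.X * chebU (n + 1) - chebU n

end

/-!
By the Leibniz rule, `∂_i P_w = ∑ₘ δ_{w_m,i} P_{w_{<m}} ⊗ P_{w_{>m}}`, so applying `ev⊗id` leaves
only the `m = 0` term once we know `τ(P_u(x)) = 0` for every nonempty word `u`. For that, cut `u`
into maximal runs `i^k`: then `P_u` is the product of the one-variable polynomials `𝒰_k(X_i)`
over the runs, each `𝒰_k(x_i)` with `k ≥ 1` is centred (substitute `t = 2 cos θ` in the
semicircle integral), and consecutive runs use different variables, so freeness kills the trace.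
-/

open Polynomial Polynomial.Chebyshev Real

lemma chebU_eq_S : ∀ k : ℕ, chebU k = S ℂ k
  | 0 => by simp [chebU]
  | 1 => by simp [chebU]
  | k + 2 => by
    rw [chebU, chebU_eq_S (k + 1), chebU_eq_S k]
    push_cast
    rw [S_add_two]

lemma integral_cos_nat_mul {m : ℕ} (hm : m ≠ 0) : ∫ θ in 0..π, cos (m * θ) = 0 := by
  rw [intervalIntegral.integral_comp_mul_left cos (by positivity)]
  simp [sin_nat_mul_pi]

lemma integral_eval_S_mul_sqrt_four_sub_sq_eq_zero {k : ℕ} (hk : k ≠ 0) :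
    ∫ t in (-2 : ℝ)..2, (S ℝ k).eval t * √(4 - t ^ 2) = 0 := by
  set g : ℝ → ℝ := fun t => (S ℝ k).eval t * √(4 - t ^ 2)
  have hsubst : ∫ θ in 0..π, (g ∘ fun θ => 2 * cos θ) θ * -(2 * sin θ)
      = ∫ t in (2 : ℝ)..(-2), g t := by
    convert intervalIntegral.integral_comp_mul_deriv (g := g)
      (fun θ _ => (hasDerivAt_cos θ).const_mul 2) (by fun_prop) (by fun_prop) using 2 <;> simp
  have htrig : ∀ θ ∈ Set.uIcc 0 π, (g ∘ fun θ => 2 * cos θ) θ * -(2 * sin θ)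
      = -(2 * cos (k * θ) - 2 * cos ((k + 2 : ℕ) * θ)) := by
    intro θ hθ
    rw [Set.uIcc_of_le pi_pos.le] at hθ
    have hsqrt : √(4 - (2 * cos θ) ^ 2) = 2 * sin θ := by
      rw [show 4 - (2 * cos θ) ^ 2 = (2 * sin θ) ^ 2 by nlinarith [sin_sq_add_cos_sq θ],
        sqrt_sq (by nlinarith [sin_nonneg_of_nonneg_of_le_pi hθ.1 hθ.2])]
    have hS := S_two_mul_real_cos θ k
    simp only [g, Function.comp_apply, hsqrt]
    push_cast at hS ⊢
    rw [show (k + 2) * θ = (k + 1) * θ + θ by ring, show k * θ = (k + 1) * θ - θ by ring,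
      cos_add, cos_sub]
    linear_combination (-4 * sin θ) * hS
  have hint : ∀ m : ℕ, IntervalIntegrable (fun θ => 2 * cos (m * θ)) MeasureTheory.volume 0 π :=
    fun m => by apply Continuous.intervalIntegrable; fun_prop
  rw [intervalIntegral.integral_symm, ← hsubst, intervalIntegral.integral_congr htrig,
    intervalIntegral.integral_neg, intervalIntegral.integral_sub (hint k) (hint (k + 2)),
    intervalIntegral.integral_const_mul, intervalIntegral.integral_const_mul,
    integral_cos_nat_mul hk, integral_cos_nat_mul (by omega)]
  simp

def expandRuns {α : Type*} (L : List (α × ℕ)) : List α :=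
  L.flatMap fun p => List.replicate p.2 p.1

lemma head?_expandRuns {α : Type*} {L : List (α × ℕ)} (hL : ∀ p ∈ L, p.2 ≠ 0) :
    (expandRuns L).head? = L.head?.map Prod.fst := by
  cases L with
  | nil => rfl
  | cons a r =>
    obtain ⟨m, hm⟩ := Nat.exists_eq_succ_of_ne_zero (hL a List.mem_cons_self)
    simp [expandRuns, hm, List.replicate_succ]

lemma exists_expandRuns_eq {α : Type*} (I : List α) : ∃ L : List (α × ℕ),
    L.IsChain (fun a b => a.1 ≠ b.1) ∧ (∀ p ∈ L, p.2 ≠ 0) ∧ expandRuns L = I := by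
  induction I with
  | nil => exact ⟨[], by simp, by simp, rfl⟩
  | cons i t ih =>
    obtain ⟨L, hchain, hpos, rfl⟩ := ih
    match L, hchain, hpos with
    | [], _, _ => exact ⟨[(i, 1)], by simp, by simp, rfl⟩
    | a :: r, hchain, hpos =>
      by_cases hia : i = a.1
      · refine ⟨(a.1, a.2 + 1) :: r, ?_, ?_, ?_⟩
        · simpa [List.isChain_cons] using hchain
        · simpa using fun p hp => hpos p (List.mem_cons_of_mem a hp)
        · simp [expandRuns, List.replicate_succ, hia]
      · refine ⟨(i, 1) :: a :: r, List.IsChain.cons_cons hia hchain, ?_, rfl⟩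
        simpa using hpos

section Cheb

variable {d : ℕ}

lemma cheb_cons (i : Fin d) (J : List (Fin d)) :
    cheb (i :: J) = FreeAlgebra.ι ℂ i * cheb J
      - (if J.head? = some i then (1 : ℂ) else 0) • cheb J.tail := by
  cases J with
  | nil => simp [cheb]
  | cons j t => simp [cheb, eq_comm]

lemma ι_mul_cheb (j : Fin d) (u : List (Fin d)) :
    FreeAlgebra.ι ℂ j * cheb u
      = cheb (j :: u) + (if u.head? = some j then (1 : ℂ) else 0) • cheb u.tail := by
  rw [cheb_cons, sub_add_cancel]

lemma cheb_replicate_append (i : Fin d) {J : List (Fin d)} (hJ : J.head? ≠ some i) :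
    ∀ k, cheb (List.replicate k i ++ J) = aeval (FreeAlgebra.ι ℂ i) (chebU k) * cheb J
  | 0 => by simp [chebU]
  | 1 => by simp [cheb_cons, hJ, chebU]
  | k + 2 => by
    rw [List.replicate_succ, List.cons_append, cheb_cons, cheb_replicate_append i hJ (k + 1)]
    simp only [List.replicate_succ, List.cons_append, List.head?_cons, List.tail_cons,
      if_pos, one_smul, cheb_replicate_append i hJ k, chebU, aeval_sub, map_mul, aeval_X]
    noncomm_ring

lemma cheb_expandRuns {L : List (Fin d × ℕ)} (hchain : L.IsChain (fun a b => a.1 ≠ b.1))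
    (hpos : ∀ p ∈ L, p.2 ≠ 0) :
    cheb (expandRuns L) = (L.map fun p => aeval (FreeAlgebra.ι ℂ p.1) (chebU p.2)).prod := by
  induction L with
  | nil => rfl
  | cons a r ih =>
    have hpos' : ∀ p ∈ r, p.2 ≠ 0 := fun p hp => hpos p (List.mem_cons_of_mem a hp)
    have hhead : (expandRuns r).head? ≠ some a.1 := by
      rw [head?_expandRuns hpos']
      cases r with
      | nil => simp
      | cons b r => simpa [eq_comm] using (List.isChain_cons_cons.mp hchain).1
    rw [List.map_cons, List.prod_cons, ← ih hchain.tail hpos',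
      ← cheb_replicate_append a.1 hhead]
    rfl

end Cheb

namespace IsFreeSemicircular

variable {A : Type*} [Ring A] [StarRing A] [Algebra ℂ A] {d : ℕ} {τ : A →ₗ[ℂ] ℂ}
  {x : Fin d → A}

lemma tau_aeval_map_eq_integral (hx : IsFreeSemicircular τ x) (i : Fin d) (p : ℝ[X]) :
    τ (aeval (x i) (p.map (algebraMap ℝ ℂ)))
      = ((1 / (2 * π)) * ∫ t in (-2 : ℝ)..2, p.eval t * √(4 - t ^ 2) : ℝ) := by
  induction p using Polynomial.induction_on' with
  | add p q hp hq =>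
    have hint : ∀ r : ℝ[X], IntervalIntegrable (fun t => r.eval t * √(4 - t ^ 2))
        MeasureTheory.volume (-2) 2 := fun r => by apply Continuous.intervalIntegrable; fun_prop
    simp only [Polynomial.map_add, map_add, hp, hq, eval_add, add_mul,
      intervalIntegral.integral_add (hint p) (hint q)]
    push_cast
    ring
  | monomial n c =>
    rw [map_monomial, aeval_monomial, ← Algebra.smul_def, map_smul, hx.2.1, semicircleMoment]
    simp only [eval_monomial, mul_assoc, intervalIntegral.integral_const_mul]
    push_cast
    simp only [Complex.coe_algebraMap, smul_eq_mul]
    ring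

lemma tau_aeval_chebU_eq_zero (hx : IsFreeSemicircular τ x) (i : Fin d) {k : ℕ} (hk : k ≠ 0) :
    τ (aeval (x i) (chebU k)) = 0 := by
  rw [chebU_eq_S, ← map_S (algebraMap ℝ ℂ), hx.tau_aeval_map_eq_integral,
    integral_eval_S_mul_sqrt_four_sub_sq_eq_zero hk]
  simp

lemma tau_prod_aeval_eq_zero (hx : IsFreeSemicircular τ x) {L : List (Fin d × ℂ[X])}
    (hne : L ≠ []) (hchain : L.IsChain (fun a b => a.1 ≠ b.1))
    (hcenter : ∀ q ∈ L, τ (aeval (x q.1) q.2) = 0) :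
    τ ((L.map fun q => aeval (x q.1) q.2).prod) = 0 := by
  obtain ⟨a, r, rfl⟩ := List.exists_cons_of_ne_nil hne
  have halt : ∀ s : Fin r.length, ((a :: r).get s.castSucc).1 ≠ ((a :: r).get s.succ).1 :=
    fun s => List.isChain_iff_getElem.mp hchain s (by simp)
  convert hx.2.2 r.length (fun s => ((a :: r).get s).1) halt (fun s => ((a :: r).get s).2)
  rw [← List.ofFn_getElem_eq_map]
  congr 1
  funext s
  rw [hcenter _ (List.get_mem _ s), zero_smul, sub_zero]
  rfl

lemma tau_lift_cheb_eq_zero (hx : IsFreeSemicircular τ x) {I : List (Fin d)} (hI : I ≠ []) :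
    τ (FreeAlgebra.lift ℂ x (cheb I)) = 0 := by
  obtain ⟨L, hchain, hpos, rfl⟩ := exists_expandRuns_eq I
  have hL : L ≠ [] := by rintro rfl; exact hI rfl
  have hlift : FreeAlgebra.lift ℂ x (cheb (expandRuns L))
      = ((L.map fun p => (p.1, chebU p.2)).map fun q => aeval (x q.1) q.2).prod := by
    simp [cheb_expandRuns hchain hpos, map_list_prod, Function.comp_def, ← aeval_algHom_apply]
  rw [hlift]
  refine hx.tau_prod_aeval_eq_zero (by simpa using hL) ((List.isChain_map _).mpr hchain) ?_
  simp only [List.mem_map, forall_exists_index, and_imp]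
  rintro _ p hp rfl
  exact hx.tau_aeval_chebU_eq_zero p.1 (hpos p hp)

end IsFreeSemicircular

lemma LinearMap.map_one_eq_zero_of_leibniz {B : Type*} [Ring B] [Algebra ℂ B]
    (δ : B →ₗ[ℂ] B ⊗[ℂ] B) (hδ : ∀ P Q, δ (P * Q) = δ P * (1 ⊗ₜ Q) + (P ⊗ₜ 1) * δ Q) :
    δ 1 = 0 := by
  have h := hδ 1 1
  rw [← Algebra.TensorProduct.one_def, mul_one, one_mul, mul_one] at h
  simpa using h

section ChebDeriv

variable {d : ℕ}

def chebDerivTerm (i : Fin d) (w : List (Fin d)) (m : ℕ) :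
    FreeAlgebra ℂ (Fin d) ⊗[ℂ] FreeAlgebra ℂ (Fin d) :=
  (if w[m]? = some i then (1 : ℂ) else 0) • (cheb (w.take m) ⊗ₜ cheb (w.drop (m + 1)))

lemma ι_tmul_one_mul_chebDerivTerm (i j : Fin d) (u : List (Fin d)) (m : ℕ) :
    (FreeAlgebra.ι ℂ j ⊗ₜ 1) * chebDerivTerm i u m = chebDerivTerm i (j :: u) (m + 1)
      + (if (u.take m).head? = some j then (1 : ℂ) else 0) •
        (if u[m]? = some i then (1 : ℂ) else 0) •
          (cheb (u.take m).tail ⊗ₜ cheb (u.drop (m + 1))) := by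
  simp only [chebDerivTerm, mul_smul_comm, Algebra.TensorProduct.tmul_mul_tmul, one_mul,
    ι_mul_cheb, TensorProduct.add_tmul, TensorProduct.smul_tmul', smul_add, List.take_succ_cons,
    List.drop_succ_cons, List.getElem?_cons_succ]
  rw [smul_comm]

lemma ι_tmul_one_mul_chebDerivTerm_zero (i j : Fin d) (u : List (Fin d)) :
    (FreeAlgebra.ι ℂ j ⊗ₜ 1) * chebDerivTerm i u 0 = chebDerivTerm i (j :: u) 1 := by
  rw [ι_tmul_one_mul_chebDerivTerm]
  simp

lemma ι_tmul_one_mul_chebDerivTerm_succ (i j k : Fin d) (t : List (Fin d)) (m : ℕ) :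
    (FreeAlgebra.ι ℂ j ⊗ₜ 1) * chebDerivTerm i (k :: t) (m + 1)
      = chebDerivTerm i (j :: k :: t) (m + 2)
        + (if j = k then (1 : ℂ) else 0) • chebDerivTerm i t m := by
  rw [ι_tmul_one_mul_chebDerivTerm]
  simp [chebDerivTerm, eq_comm]

lemma map_cheb_eq_sum_chebDerivTerm {i : Fin d}
    {δ : FreeAlgebra ℂ (Fin d) →ₗ[ℂ] FreeAlgebra ℂ (Fin d) ⊗[ℂ] FreeAlgebra ℂ (Fin d)}
    (hgen : ∀ j, δ (FreeAlgebra.ι ℂ j) = if i = j then 1 ⊗ₜ 1 else 0)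
    (hδ : ∀ P Q, δ (P * Q) = δ P * (1 ⊗ₜ Q) + (P ⊗ₜ 1) * δ Q) (w : List (Fin d)) :
    δ (cheb w) = ∑ m ∈ Finset.range w.length, chebDerivTerm i w m := by
  have hgen_mul : ∀ j u, δ (FreeAlgebra.ι ℂ j) * (1 ⊗ₜ cheb u) = chebDerivTerm i (j :: u) 0 := by
    intro j u
    by_cases h : i = j <;> simp [hgen, chebDerivTerm, cheb, h, eq_comm]
  induction w using cheb.induct with
  | case1 => simp [cheb, δ.map_one_eq_zero_of_leibniz hδ]
  | case2 j => simpa [cheb, ← Algebra.TensorProduct.one_def] using hgen_mul j []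
  | case3 j k t ih₁ ih₂ =>
    rw [cheb, map_sub, map_smul, hδ, hgen_mul, ih₁, ih₂, Finset.mul_sum, List.length_cons,
      Finset.sum_range_succ']
    simp only [ι_tmul_one_mul_chebDerivTerm_succ, ι_tmul_one_mul_chebDerivTerm_zero,
      Finset.sum_add_distrib, ← Finset.smul_sum, List.length_cons]
    rw [Finset.sum_range_succ' _ (t.length + 1), Finset.sum_range_succ' _ t.length]
    abel

end ChebDeriv

theorem cheb_recursion_via_deriv_general {d : ℕ} {A : Type*} [NormedRing A] [StarRing A]
    [NormedAlgebra ℂ A]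
    (τ : A →ₗ[ℂ] ℂ) (x : Fin d → A)
    (hτ : IsFaithfulTracialState τ) (hx : IsFreeSemicircular τ x)
    (D : Fin d → (FreeAlgebra ℂ (Fin d) →ₗ[ℂ]
      FreeAlgebra ℂ (Fin d) ⊗[ℂ] FreeAlgebra ℂ (Fin d)))
    (hD1 : ∀ i j : Fin d, D i (FreeAlgebra.ι ℂ j) =
      if i = j then (1 : FreeAlgebra ℂ (Fin d)) ⊗ₜ[ℂ] (1 : FreeAlgebra ℂ (Fin d)) else 0)
    (hD2 : ∀ (i : Fin d) (P Q : FreeAlgebra ℂ (Fin d)),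
      D i (P * Q) = D i P * ((1 : FreeAlgebra ℂ (Fin d)) ⊗ₜ[ℂ] Q)
        + (P ⊗ₜ[ℂ] (1 : FreeAlgebra ℂ (Fin d))) * D i Q)
    (E : FreeAlgebra ℂ (Fin d) ⊗[ℂ] FreeAlgebra ℂ (Fin d) →ₗ[ℂ] FreeAlgebra ℂ (Fin d))
    (hE : ∀ P Q : FreeAlgebra ℂ (Fin d),
      E (P ⊗ₜ[ℂ] Q) = τ (FreeAlgebra.lift ℂ x P) • Q) :
    (∀ (i j : Fin d) (t : List (Fin d)),
      E (D i (cheb (j :: t))) = (if j = i then (1 : ℂ) else 0) • cheb t) ∧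
    ∀ (i : Fin d) (L : List (Fin d)),
      cheb (i :: L) = FreeAlgebra.ι ℂ i * cheb L - E (D i (cheb L)) := by
  have hderiv : ∀ i j t, E (D i (cheb (j :: t))) = (if j = i then (1 : ℂ) else 0) • cheb t := by
    intro i j t
    have hvanish : ∀ m, E (chebDerivTerm i (j :: t) (m + 1)) = 0 := fun m => by
      rw [chebDerivTerm, map_smul, List.take_succ_cons, hE,
        hx.tau_lift_cheb_eq_zero (List.cons_ne_nil _ _), zero_smul, smul_zero]
    rw [map_cheb_eq_sum_chebDerivTerm (hD1 i) (hD2 i), map_sum, List.length_cons,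
      Finset.sum_range_succ']
    simp only [hvanish, Finset.sum_const_zero, zero_add]
    rw [chebDerivTerm, map_smul, hE]
    simp [cheb, hτ.1]
  refine ⟨hderiv, fun i L => ?_⟩
  cases L with
  | nil => simp [cheb, (D i).map_one_eq_zero_of_leibniz (hD2 i)]
  | cons j t => simp [hderiv, cheb, eq_comm]

/-- `(ev⊗id)(∂_{i_n} P_{i_{n−1},…,i_1}) = δ_{i_{n−1},i_n} P_{i_{n−2},…,i_1}`, and
consequently the recursive definition of the free Chebyshev polynomials agrees with
the definition `P_{i_n,…,i_1} = X_{i_n} P_{i_{n−1},…,i_1} − (ev⊗id)(∂_{i_n} P_{i_{n−1},…,i_1})`.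
Here `D` is the (unique) noncommutative derivative and `ev⊗id` is induced by
`A ⊗ B ↦ τ(A(x))·B`. -/
theorem cheb_recursion_via_deriv {d : ℕ} {A : Type*} [NormedRing A] [StarRing A]
    [CStarRing A] [CompleteSpace A] [NormedAlgebra ℂ A] [StarModule ℂ A]
    (τ : A →ₗ[ℂ] ℂ) (x : Fin d → A)
    (hτ : IsFaithfulTracialState τ) (hx : IsFreeSemicircular τ x)
    (D : Fin d → (FreeAlgebra ℂ (Fin d) →ₗ[ℂ]
      FreeAlgebra ℂ (Fin d) ⊗[ℂ] FreeAlgebra ℂ (Fin d)))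
    (hD1 : ∀ i j : Fin d, D i (FreeAlgebra.ι ℂ j) =
      if i = j then (1 : FreeAlgebra ℂ (Fin d)) ⊗ₜ[ℂ] (1 : FreeAlgebra ℂ (Fin d)) else 0)
    (hD2 : ∀ (i : Fin d) (P Q : FreeAlgebra ℂ (Fin d)),
      D i (P * Q) = D i P * ((1 : FreeAlgebra ℂ (Fin d)) ⊗ₜ[ℂ] Q)
        + (P ⊗ₜ[ℂ] (1 : FreeAlgebra ℂ (Fin d))) * D i Q)
    (E : FreeAlgebra ℂ (Fin d) ⊗[ℂ] FreeAlgebra ℂ (Fin d) →ₗ[ℂ] FreeAlgebra ℂ (Fin d))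
    (hE : ∀ P Q : FreeAlgebra ℂ (Fin d),
      E (P ⊗ₜ[ℂ] Q) = τ (FreeAlgebra.lift ℂ x P) • Q) :
    (∀ (i j : Fin d) (t : List (Fin d)),
      E (D i (cheb (j :: t))) = (if j = i then (1 : ℂ) else 0) • cheb t) ∧
    ∀ (i : Fin d) (L : List (Fin d)),
      cheb (i :: L) = FreeAlgebra.ι ℂ i * cheb L - E (D i (cheb L)) :=
  cheb_recursion_via_deriv_general τ x hτ hx D hD1 hD2 E hE
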